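/- The number of (H,H)-double cosets of the Weyl group W of E₈ with respect to the stabilizer H of the root θ equals 5; that is, the double coset space H\W/H has exactly 5 elements. -/

import Mathlib

open scoped BigOperators RealInnerProductSpace

noncomputable section

abbrev E8Space : Type := EuclideanSpace ℝ (Fin 8)

/-- The E₈ root system: vectors of square-norm 2 whose coordinates are either all
integers or all half-integers, with even coordinate sum. -/
def E8Delta : Set E8Space :=
  {v | ⟪v, v⟫ = 2 ∧
    ((∀ i : Fin 8, ∃ n : ℤ, v i = (n : ℝ)) ∨
     (∀ i : Fin 8, ∃ n : ℤ, v i = (n : ℝ) + 1 / 2)) ∧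
    ∃ m : ℤ, (∑ i : Fin 8, v i) = 2 * (m : ℝ)}

/-- The highest root θ = (0,0,0,0,0,0,1,1) of E₈. -/
def thetaE8 : E8Space := WithLp.toLp 2 (![0, 0, 0, 0, 0, 0, 1, 1] : Fin 8 → ℝ)

/-- The Weyl group of E₈: the group of invertible linear maps of ℝ⁸ generated by
the reflections `x ↦ x − ⟪x,α⟫α` in the roots `α ∈ Δ`. -/
def weylGroupE8 : Subgroup (E8Space ≃ₗ[ℝ] E8Space) :=
  Subgroup.closure
    {g : E8Space ≃ₗ[ℝ] E8Space | ∃ α ∈ E8Delta, ∀ x, g x = x - ⟪x, α⟫ • α}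

/-- The stabilizer of the highest root θ in the Weyl group of E₈. -/
def stabThetaE8 : Subgroup (E8Space ≃ₗ[ℝ] E8Space) :=
  weylGroupE8 ⊓ MulAction.stabilizer (E8Space ≃ₗ[ℝ] E8Space) thetaE8

/-!
A double coset `H w H` is determined by the `H`-orbit of the root `w θ`, and `⟪θ, ·⟫` is
`H`-invariant. So it suffices to show that `⟪θ, w θ⟫` takes exactly the values `-2, …, 2` on `W`,
and that `H` is transitive on the roots `v` with a given value of `⟪θ, v⟫`. The values `±2` are
attained only at `±θ`, the roots with value `-1` are the negatives of those with value `1`, and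
for the values `1` and `0` every root is reached from a base root by an explicit word of
reflections in roots orthogonal to `θ`. These words are checked by `decide` in doubled integer
coordinates, after listing the roots as `±2eᵢ ± 2eⱼ` and `(±1, …, ±1)`.
-/

open Matrix

section DoubleCoset

variable {G X : Type*} [Group G] [MulAction G X]

theorem exists_smul_eq_of_smul_eq {H : Subgroup G} {b u v : X} (hu : ∃ h ∈ H, h • b = u)
    (hv : ∃ h ∈ H, h • b = v) : ∃ h ∈ H, h • u = v := by
  obtain ⟨h₁, hh₁, rfl⟩ := hu
  obtain ⟨h₂, hh₂, rfl⟩ := hv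
  exact ⟨h₂ * h₁⁻¹, mul_mem hh₂ (inv_mem hh₁), by rw [mul_smul, inv_smul_smul]⟩

theorem doubleCoset_eq_doubleCoset_iff_exists_smul {W : Subgroup G} {x : X} {w w' : G}
    (hw : w ∈ W) (hw' : w' ∈ W) :
    DoubleCoset.doubleCoset w (W ⊓ MulAction.stabilizer G x : Subgroup G)
          (W ⊓ MulAction.stabilizer G x : Subgroup G) =
        DoubleCoset.doubleCoset w' (W ⊓ MulAction.stabilizer G x : Subgroup G)
          (W ⊓ MulAction.stabilizer G x : Subgroup G) ↔
      ∃ h ∈ W ⊓ MulAction.stabilizer G x, h • w' • x = w • x := by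
  set H := W ⊓ MulAction.stabilizer G x
  constructor
  · intro heq
    have hmem := heq ▸ DoubleCoset.mem_doubleCoset_self H H w
    obtain ⟨h₁, hh₁, h₂, hh₂, rfl⟩ := DoubleCoset.mem_doubleCoset.1 hmem
    refine ⟨h₁, hh₁, ?_⟩
    rw [mul_smul, mul_smul, MulAction.mem_stabilizer_iff.1 (Subgroup.mem_inf.1 hh₂).2]
  · rintro ⟨h, hh, hx⟩
    have hu : w⁻¹ * h * w' ∈ H := by
      refine Subgroup.mem_inf.2 ⟨mul_mem (mul_mem (inv_mem hw) (Subgroup.mem_inf.1 hh).1) hw', ?_⟩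
      rw [MulAction.mem_stabilizer_iff, mul_smul, mul_smul, hx, inv_smul_smul]
    exact (DoubleCoset.doubleCoset_eq_of_mem (DoubleCoset.mem_doubleCoset.2
      ⟨h⁻¹, inv_mem hh, w⁻¹ * h * w', hu, by group⟩)).symm

end DoubleCoset

theorem Set.ncard_image_eq_ncard_image_of_eq_iff {α β γ : Type*} {f : α → β} {g : α → γ}
    {s : Set α} (hfg : ∀ a ∈ s, ∀ b ∈ s, f a = f b ↔ g a = g b) :
    (f '' s).ncard = (g '' s).ncard := by
  refine Set.ncard_congr (fun y hy => g (Classical.choose hy))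
    (fun y hy => ⟨_, (Classical.choose_spec hy).1, rfl⟩) ?_ ?_
  · intro y y' hy hy' he
    rw [← (Classical.choose_spec hy).2, ← (Classical.choose_spec hy').2]
    exact (hfg _ (Classical.choose_spec hy).1 _ (Classical.choose_spec hy').1).2 he
  · rintro _ ⟨a, ha, rfl⟩
    have hfa : f a ∈ f '' s := ⟨a, ha, rfl⟩
    exact ⟨f a, hfa, (hfg _ (Classical.choose_spec hfa).1 _ ha).1 (Classical.choose_spec hfa).2⟩

theorem Subgroup.closure_induction_of_mul_self_eq_one {G : Type*} [Group G] {s : Set G}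
    (hs : ∀ g ∈ s, g * g = 1) {p : G → Prop} (one : p 1) (mul : ∀ g ∈ s, ∀ x, p x → p (g * x))
    {x : G} (hx : x ∈ Subgroup.closure s) : p x :=
  Subgroup.closure_induction_left (p := fun x _ => p x) one (fun g hg x _ => mul g hg x)
    (fun g hg x _ hpx => by rw [inv_eq_of_mul_eq_one_right (hs g hg)]; exact mul g hg x hpx) hx

theorem eq_of_real_inner_eq {E : Type*} [NormedAddCommGroup E] [InnerProductSpace ℝ E]
    {u v : E} (hu : ⟪u, u⟫ = ⟪u, v⟫) (hv : ⟪v, v⟫ = ⟪u, v⟫) : u = v := by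
  have : ⟪u - v, u - v⟫ = 0 := by
    rw [inner_sub_left, inner_sub_right, inner_sub_right, real_inner_comm u v]; linarith
  exact sub_eq_zero.1 (inner_self_eq_zero.1 this)

/-- The E₈ lattice in doubled coordinates: `r` stands for the vector `r / 2` of `ℝ⁸`. -/
def e8LatticeZ : AddSubgroup (Fin 8 → ℤ) where
  carrier := {r | (∀ i, r i ≡ r 0 [ZMOD 2]) ∧ 4 ∣ ∑ i, r i}
  add_mem' := fun ⟨ha, ha'⟩ ⟨hb, hb'⟩ =>
    ⟨fun i => (ha i).add (hb i), by simpa [Finset.sum_add_distrib] using dvd_add ha' hb'⟩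
  zero_mem' := ⟨fun _ => rfl, by simp⟩
  neg_mem' := fun ⟨ha, ha'⟩ => ⟨fun i => (ha i).neg, by simpa using ha'⟩

instance : DecidablePred (· ∈ e8LatticeZ) := fun r =>
  inferInstanceAs (Decidable ((∀ i, r i ≡ r 0 [ZMOD 2]) ∧ 4 ∣ ∑ i, r i))

def IsRootZ (r : Fin 8 → ℤ) : Prop := r ∈ e8LatticeZ ∧ r ⬝ᵥ r = 8

instance : DecidablePred IsRootZ := fun _ => inferInstanceAs (Decidable (_ ∧ _))

theorem eight_dvd_dotProduct_self {r : Fin 8 → ℤ} (hr : r ∈ e8LatticeZ) : 8 ∣ r ⬝ᵥ r := by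
  obtain ⟨hpar, hsum⟩ := hr
  set c := r 0
  obtain ⟨d, hd⟩ : ∃ d : Fin 8 → ℤ, ∀ i, r i = c + 2 * d i :=
    ⟨fun i => (r i - c) / 2, fun i => by have := (hpar i).dvd; dsimp only; omega⟩
  have hsum' : ∑ i, r i = 8 * c + 2 * ∑ i, d i := by
    simp [hd, Finset.sum_add_distrib, Finset.mul_sum]
  obtain ⟨e, he⟩ : 2 ∣ ∑ i, d i := by omega
  obtain ⟨m, hm⟩ : 2 ∣ ∑ i, d i * (d i - 1) :=
    Finset.dvd_sum fun i _ => (Int.even_mul_pred_self (d i)).two_dvd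
  have hdot : r ⬝ᵥ r = 8 * c ^ 2 + 4 * c * ∑ i, d i + 4 * ∑ i, d i * (d i - 1) + 4 * ∑ i, d i := by
    simp only [dotProduct, hd, Fin.sum_univ_eight]
    ring
  rw [hdot, he, hm]
  exact ⟨c ^ 2 + c * e + m + e, by ring⟩

theorem four_dvd_dotProduct {a b : Fin 8 → ℤ} (ha : a ∈ e8LatticeZ) (hb : b ∈ e8LatticeZ) :
    4 ∣ a ⬝ᵥ b := by
  have hab := eight_dvd_dotProduct_self (add_mem ha hb)
  rw [add_dotProduct, dotProduct_add, dotProduct_add, dotProduct_comm b a] at hab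
  have := eight_dvd_dotProduct_self ha
  have := eight_dvd_dotProduct_self hb
  omega

def reflZ (a r : Fin 8 → ℤ) : Fin 8 → ℤ := r - (a ⬝ᵥ r / 4) • a

theorem reflZ_mem {a r : Fin 8 → ℤ} (ha : a ∈ e8LatticeZ) (hr : r ∈ e8LatticeZ) :
    reflZ a r ∈ e8LatticeZ :=
  sub_mem hr (AddSubgroup.zsmul_mem _ ha _)

theorem isRootZ_reflZ {a r : Fin 8 → ℤ} (ha : IsRootZ a) (hr : IsRootZ r) :
    IsRootZ (reflZ a r) := by
  refine ⟨reflZ_mem ha.1 hr.1, ?_⟩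
  obtain ⟨k, hk⟩ := four_dvd_dotProduct ha.1 hr.1
  simp only [reflZ, hk, sub_dotProduct, dotProduct_sub, smul_dotProduct, dotProduct_smul,
    dotProduct_comm r a, hr.2, ha.2, smul_eq_mul]
  rw [Int.mul_ediv_cancel_left _ four_ne_zero]
  ring

theorem foldr_reflZ_mem {l : List (Fin 8 → ℤ)} (hl : ∀ a ∈ l, a ∈ e8LatticeZ) {r : Fin 8 → ℤ}
    (hr : r ∈ e8LatticeZ) : l.foldr reflZ r ∈ e8LatticeZ := by
  induction l with
  | nil => exact hr
  | cons a l ih =>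
    exact reflZ_mem (hl a List.mem_cons_self) (ih fun b hb => hl b (List.mem_cons_of_mem a hb))

theorem foldr_reflZ_eq_self {l : List (Fin 8 → ℤ)} {r : Fin 8 → ℤ} (hl : ∀ a ∈ l, a ⬝ᵥ r = 0) :
    l.foldr reflZ r = r := by
  induction l with
  | nil => rfl
  | cons a l ih =>
    rw [List.foldr_cons, ih fun b hb => hl b (List.mem_cons_of_mem a hb), reflZ,
      hl a List.mem_cons_self]
    simp

def toE8 : (Fin 8 → ℤ) →+ E8Space where
  toFun r := WithLp.toLp 2 fun i => (r i : ℝ) / 2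
  map_zero' := by ext; simp
  map_add' r s := by ext; simp [add_div]

theorem toE8_apply (r : Fin 8 → ℤ) (i : Fin 8) : toE8 r i = (r i : ℝ) / 2 := rfl

theorem inner_toE8 (a b : Fin 8 → ℤ) : ⟪toE8 a, toE8 b⟫ = ((a ⬝ᵥ b : ℤ) : ℝ) / 4 := by
  simp only [PiLp.inner_apply, RCLike.inner_apply, conj_trivial, toE8_apply, dotProduct]
  push_cast
  rw [Finset.sum_div]
  exact Finset.sum_congr rfl fun i _ => by ring

theorem toE8_reflZ {a r : Fin 8 → ℤ} (h : 4 ∣ a ⬝ᵥ r) :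
    toE8 (reflZ a r) = toE8 r - ⟪toE8 r, toE8 a⟫ • toE8 a := by
  obtain ⟨k, hk⟩ := h
  rw [reflZ, map_sub, map_zsmul, inner_toE8, dotProduct_comm r a, hk,
    Int.mul_ediv_cancel_left _ four_ne_zero]
  push_cast
  rw [mul_div_cancel_left₀ _ four_ne_zero, Int.cast_smul_eq_zsmul]

theorem exists_toE8_eq_iff {v : E8Space} :
    ((∀ i, ∃ n : ℤ, v i = n) ∨ (∀ i, ∃ n : ℤ, v i = n + 1 / 2)) ↔
      ∃ r : Fin 8 → ℤ, (∀ i, r i ≡ r 0 [ZMOD 2]) ∧ toE8 r = v := by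
  constructor
  · rintro (hv | hv) <;> choose n hn using hv
    · refine ⟨fun i => 2 * n i, fun i => ?_, PiLp.ext fun i => ?_⟩
      · simp [Int.ModEq, Int.mul_emod_right]
      · simp [toE8_apply, hn]
    · refine ⟨fun i => 2 * n i + 1, fun i => ?_, PiLp.ext fun i => ?_⟩
      · simp [Int.ModEq, Int.add_emod, Int.mul_emod_right]
      · simp [toE8_apply, hn]; ring
  · rintro ⟨r, hr, rfl⟩
    rcases Int.emod_two_eq (r 0) with h0 | h0
    · refine Or.inl fun i => ?_
      obtain ⟨m, hm⟩ : ∃ m, r i = 2 * m := ⟨r i / 2, by have := hr i; rw [Int.ModEq] at this; omega⟩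
      exact ⟨m, by rw [toE8_apply, hm]; push_cast; ring⟩
    · refine Or.inr fun i => ?_
      obtain ⟨m, hm⟩ : ∃ m, r i = 2 * m + 1 :=
        ⟨r i / 2, by have := hr i; rw [Int.ModEq] at this; omega⟩
      exact ⟨m, by rw [toE8_apply, hm]; push_cast; ring⟩

theorem mem_E8Delta_iff {v : E8Space} : v ∈ E8Delta ↔ ∃ r, IsRootZ r ∧ toE8 r = v := by
  have hsum (r : Fin 8 → ℤ) : ∑ i, toE8 r i = ((∑ i, r i : ℤ) : ℝ) / 2 := by
    simp [toE8_apply, Finset.sum_div]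
  constructor
  · rintro ⟨hnorm, hcoord, m, hm⟩
    obtain ⟨r, hpar, rfl⟩ := exists_toE8_eq_iff.1 hcoord
    rw [inner_toE8] at hnorm
    rw [hsum] at hm
    exact ⟨r, ⟨⟨hpar, m, by exact_mod_cast (by linarith : ((∑ i, r i : ℤ) : ℝ) = 4 * m)⟩,
      by exact_mod_cast (by linarith : ((r ⬝ᵥ r : ℤ) : ℝ) = 8)⟩, rfl⟩
  · rintro ⟨r, ⟨⟨hpar, m, hm⟩, hnorm⟩, rfl⟩
    refine ⟨by rw [inner_toE8, hnorm]; norm_num, exists_toE8_eq_iff.2 ⟨r, hpar, rfl⟩, m, ?_⟩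
    rw [hsum, hm]; push_cast; ring

theorem neg_mem_E8Delta {v : E8Space} (hv : v ∈ E8Delta) : -v ∈ E8Delta := by
  obtain ⟨r, ⟨hr, hnorm⟩, rfl⟩ := mem_E8Delta_iff.1 hv
  exact mem_E8Delta_iff.2 ⟨-r, ⟨neg_mem hr, by simpa using hnorm⟩, map_neg _ _⟩

theorem inner_mem_of_mem_E8Delta {u v : E8Space} (hu : u ∈ E8Delta) (hv : v ∈ E8Delta) :
    ⟪u, v⟫ ∈ ({-2, -1, 0, 1, 2} : Set ℝ) := by
  have hcs := real_inner_mul_inner_self_le u v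
  rw [hu.1, hv.1] at hcs
  obtain ⟨a, ha, rfl⟩ := mem_E8Delta_iff.1 hu
  obtain ⟨r, hr, rfl⟩ := mem_E8Delta_iff.1 hv
  obtain ⟨k, hk⟩ := four_dvd_dotProduct ha.1 hr.1
  rw [inner_toE8, hk] at hcs ⊢
  push_cast at hcs ⊢
  have : k * k ≤ 4 := by exact_mod_cast (by nlinarith : (k : ℝ) * k ≤ 4)
  have hlo : -2 ≤ k := by nlinarith
  have hhi : k ≤ 2 := by nlinarith
  interval_cases k <;> norm_num

def thetaZ : Fin 8 → ℤ := ![0, 0, 0, 0, 0, 0, 2, 2]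

theorem toE8_thetaZ : toE8 thetaZ = thetaE8 := by
  ext i; fin_cases i <;> simp [toE8_apply, thetaZ, thetaE8]

theorem thetaE8_mem : thetaE8 ∈ E8Delta :=
  mem_E8Delta_iff.2 ⟨thetaZ, by decide, toE8_thetaZ⟩

theorem eq_thetaE8_of_inner_eq_two {v : E8Space} (hv : v ∈ E8Delta) (h : ⟪thetaE8, v⟫ = 2) :
    v = thetaE8 :=
  (eq_of_real_inner_eq (thetaE8_mem.1.trans h.symm) (hv.1.trans h.symm)).symm

section WeylGroup

variable {g : E8Space ≃ₗ[ℝ] E8Space} {α : E8Space}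

theorem mul_self_eq_one_of_reflection (hα : ⟪α, α⟫ = 2) (hg : ∀ x, g x = x - ⟪x, α⟫ • α) :
    g * g = 1 :=
  LinearEquiv.ext fun x => by
    simp only [LinearEquiv.mul_apply, hg, inner_sub_left, real_inner_smul_left, hα,
      LinearEquiv.coe_one, id]
    module

theorem inner_map_map_of_reflection (hα : ⟪α, α⟫ = 2) (hg : ∀ x, g x = x - ⟪x, α⟫ • α)
    (x y : E8Space) : ⟪g x, g y⟫ = ⟪x, y⟫ := by
  simp only [hg, inner_sub_left, inner_sub_right, real_inner_smul_left, real_inner_smul_right, hα,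
    real_inner_comm α y]
  ring

theorem weylGroupE8_induction {p : (E8Space ≃ₗ[ℝ] E8Space) → Prop} (one : p 1)
    (mul : ∀ α ∈ E8Delta, ∀ s w, (∀ x, s x = x - ⟪x, α⟫ • α) → p w → p (s * w))
    (hg : g ∈ weylGroupE8) : p g := by
  refine Subgroup.closure_induction_of_mul_self_eq_one ?_ one ?_ hg
  · rintro s ⟨α, hα, hs⟩
    exact mul_self_eq_one_of_reflection hα.1 hs
  · rintro s ⟨α, hα, hs⟩ w
    exact mul α hα s w hs

theorem inner_map_map_of_mem_weylGroupE8 (hg : g ∈ weylGroupE8) (x y : E8Space) :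
    ⟪g x, g y⟫ = ⟪x, y⟫ := by
  refine weylGroupE8_induction (p := fun g => ∀ x y, ⟪g x, g y⟫ = ⟪x, y⟫) (fun _ _ => rfl)
    (fun α hα s w hs hw x y => ?_) hg x y
  rw [LinearEquiv.mul_apply, LinearEquiv.mul_apply, inner_map_map_of_reflection hα.1 hs, hw]

theorem map_mem_E8Delta_of_mem_weylGroupE8 (hg : g ∈ weylGroupE8) {v : E8Space}
    (hv : v ∈ E8Delta) : g v ∈ E8Delta := by
  refine weylGroupE8_induction (p := fun g => ∀ v ∈ E8Delta, g v ∈ E8Delta) (fun _ hv => hv)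
    (fun α hα s w hs hw v hv => ?_) hg v hv
  obtain ⟨a, ha, rfl⟩ := mem_E8Delta_iff.1 hα
  obtain ⟨r, hr, hrv⟩ := mem_E8Delta_iff.1 (hw v hv)
  rw [LinearEquiv.mul_apply, hs, ← hrv, ← toE8_reflZ (four_dvd_dotProduct ha.1 hr.1)]
  exact mem_E8Delta_iff.2 ⟨_, isRootZ_reflZ ha hr, rfl⟩

theorem exists_reflection_mem_weylGroupE8 (hα : α ∈ E8Delta) :
    ∃ s ∈ weylGroupE8, ∀ x, s x = x - ⟪x, α⟫ • α := by
  have h2 : innerₗ E8Space α α = 2 := hα.1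
  have hs (x : E8Space) : Module.reflection h2 x = x - ⟪x, α⟫ • α := by
    rw [Module.reflection_apply, innerₗ_apply_apply, real_inner_comm]
  exact ⟨_, Subgroup.subset_closure ⟨α, hα, hs⟩, hs⟩

end WeylGroup

theorem exists_mem_weylGroupE8_toE8_eq_foldr {l : List (Fin 8 → ℤ)} (hl : ∀ a ∈ l, IsRootZ a) :
    ∃ w ∈ weylGroupE8, ∀ r ∈ e8LatticeZ, w (toE8 r) = toE8 (l.foldr reflZ r) := by
  induction l with
  | nil => exact ⟨1, one_mem _, fun _ _ => rfl⟩
  | cons a l ih =>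
    have ha := hl a List.mem_cons_self
    obtain ⟨w, hw, hwr⟩ := ih fun b hb => hl b (List.mem_cons_of_mem a hb)
    obtain ⟨s, hs, hsx⟩ := exists_reflection_mem_weylGroupE8 (mem_E8Delta_iff.2 ⟨a, ha, rfl⟩)
    refine ⟨s * w, mul_mem hs hw, fun r hr => ?_⟩
    have hlr := foldr_reflZ_mem (fun b hb => (hl b (List.mem_cons_of_mem a hb)).1) hr
    rw [LinearEquiv.mul_apply, hwr r hr, List.foldr_cons, toE8_reflZ (four_dvd_dotProduct ha.1 hlr),
      hsx]

theorem exists_mem_stabThetaE8_toE8_eq_foldr {l : List (Fin 8 → ℤ)}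
    (hl : ∀ a ∈ l, IsRootZ a ∧ thetaZ ⬝ᵥ a = 0) :
    ∃ h ∈ stabThetaE8, ∀ r ∈ e8LatticeZ, h (toE8 r) = toE8 (l.foldr reflZ r) := by
  obtain ⟨w, hw, hwr⟩ := exists_mem_weylGroupE8_toE8_eq_foldr fun a ha => (hl a ha).1
  refine ⟨w, Subgroup.mem_inf.2 ⟨hw, ?_⟩, hwr⟩
  rw [MulAction.mem_stabilizer_iff, LinearEquiv.smul_def, ← toE8_thetaZ, hwr _ (by decide),
    foldr_reflZ_eq_self fun a ha => by rw [dotProduct_comm, (hl a ha).2]]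

def oddRootZ (b : Fin 8 → Bool) : Fin 8 → ℤ := fun i => bif b i then 1 else -1

def evenRootZ (i j : Fin 8) (s t : Bool) : Fin 8 → ℤ :=
  Pi.single i (bif s then 2 else -2) + Pi.single j (bif t then 2 else -2)

theorem exists_eq_oddRootZ {r : Fin 8 → ℤ} (hr : IsRootZ r) (h0 : r 0 % 2 = 1) :
    ∃ b, r = oddRootZ b := by
  have hone : ∀ i ∈ Finset.univ, (1 : ℤ) ≤ r i * r i := fun i _ => by
    have := hr.1.1 i
    rw [Int.ModEq] at this
    have := mul_self_pos.2 (by omega : r i ≠ 0)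
    omega
  have hsq := (Finset.sum_eq_sum_iff_of_le hone).1 (by simpa [dotProduct] using hr.2.symm)
  refine ⟨fun i => decide (r i = 1), funext fun i => ?_⟩
  rcases mul_self_eq_one_iff.1 (hsq i (Finset.mem_univ i)).symm with h | h <;> simp [oddRootZ, h]

theorem exists_eq_evenRootZ {r : Fin 8 → ℤ} (hr : IsRootZ r) (h0 : r 0 % 2 = 0) :
    ∃ i j s t, i ≠ j ∧ r = evenRootZ i j s t := by
  obtain ⟨n, hn⟩ : ∃ n : Fin 8 → ℤ, ∀ i, r i = 2 * n i :=
    ⟨fun i => r i / 2, fun i => by have := hr.1.1 i; rw [Int.ModEq] at this; dsimp only; omega⟩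
  have hsum : ∑ i, n i * n i = 2 := by
    have h8 := hr.2
    simp only [dotProduct, hn] at h8
    have : ∑ i, 2 * n i * (2 * n i) = 4 * ∑ i, n i * n i := by
      rw [Finset.mul_sum]; exact Finset.sum_congr rfl fun i _ => by ring
    linarith
  have hunit : ∀ k, n k ≠ 0 → n k * n k = 1 := fun k hk => by
    have hle : n k * n k ≤ 2 :=
      hsum ▸ Finset.single_le_sum (f := fun i => n i * n i) (fun i _ => mul_self_nonneg _)
        (Finset.mem_univ k)
    have : -1 ≤ n k ∧ n k ≤ 1 := by constructor <;> nlinarith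
    rcases (by omega : n k = -1 ∨ n k = 1) with h | h <;> simp [h]
  have hcard : (Finset.univ.filter fun k => n k ≠ 0).card = 2 := by
    have h := Finset.natCast_card_filter (R := ℤ) (fun k => n k ≠ 0) Finset.univ
    have hsq (k : Fin 8) (_ : k ∈ Finset.univ) : (if n k ≠ 0 then (1 : ℤ) else 0) = n k * n k := by
      split_ifs with hk
      · exact (hunit k hk).symm
      · simp [not_not.1 hk]
    rw [Finset.sum_congr rfl hsq, hsum] at h
    exact_mod_cast h
  obtain ⟨i, j, hij, hs⟩ := Finset.card_eq_two.1 hcard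
  have hsupp : ∀ k, n k ≠ 0 ↔ k = i ∨ k = j := fun k => by simpa using Finset.ext_iff.1 hs k
  refine ⟨i, j, decide (n i = 1), decide (n j = 1), hij, funext fun k => ?_⟩
  rcases em (k = i) with rfl | hki
  · rcases mul_self_eq_one_iff.1 (hunit k ((hsupp k).2 (Or.inl rfl))) with h | h <;>
      simp [evenRootZ, hn, h, hij.symm]
  rcases em (k = j) with rfl | hkj
  · rcases mul_self_eq_one_iff.1 (hunit k ((hsupp k).2 (Or.inr rfl))) with h | h <;>
      simp [evenRootZ, hn, h, hki]
  have : n k = 0 := by_contra fun h => ((hsupp k).1 h).elim hki hkj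
  simp [evenRootZ, hn, this, hki, hkj]

theorem forall_isRootZ_of {p : (Fin 8 → ℤ) → Prop}
    (odd : ∀ b, 4 ∣ ∑ i, oddRootZ b i → p (oddRootZ b))
    (even : ∀ i j, i ≠ j → ∀ s t, p (evenRootZ i j s t)) : ∀ r, IsRootZ r → p r := by
  intro r hr
  rcases Int.emod_two_eq (r 0) with h0 | h0
  · obtain ⟨i, j, s, t, hij, rfl⟩ := exists_eq_evenRootZ hr h0
    exact even i j hij s t
  · obtain ⟨b, rfl⟩ := exists_eq_oddRootZ hr h0
    exact odd b hr.1.2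

theorem exists_smul_toE8_eq_of_words {base : Fin 8 → ℤ} {words : List (List (Fin 8 → ℤ))}
    {k : ℤ} (hbase : base ∈ e8LatticeZ)
    (hwords : ∀ l ∈ words, ∀ a ∈ l, IsRootZ a ∧ thetaZ ⬝ᵥ a = 0)
    (hreach : ∀ r, IsRootZ r → thetaZ ⬝ᵥ r = 4 * k → ∃ l ∈ words, l.foldr reflZ base = r)
    {v : E8Space} (hv : v ∈ E8Delta) (hθv : ⟪thetaE8, v⟫ = k) :
    ∃ h ∈ stabThetaE8, h • toE8 base = v := by
  obtain ⟨r, hr, rfl⟩ := mem_E8Delta_iff.1 hv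
  rw [← toE8_thetaZ, inner_toE8] at hθv
  have hk : thetaZ ⬝ᵥ r = 4 * k := by
    exact_mod_cast (by linarith : ((thetaZ ⬝ᵥ r : ℤ) : ℝ) = 4 * k)
  obtain ⟨l, hl, rfl⟩ := hreach r hr hk
  obtain ⟨h, hh, hhr⟩ := exists_mem_stabThetaE8_toE8_eq_foldr (hwords l hl)
  exact ⟨h, hh, hhr base hbase⟩

/-- The base-5 digits of `n` shifted by `-2`: a compact encoding of the roots in the words below. -/
def decodeZ (n : ℕ) : Fin 8 → ℤ := fun i => (n / 5 ^ (i : ℕ) % 5 : ℕ) - 2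

def wordsLevelOne : List (List (Fin 8 → ℤ)) := List.map (List.map decodeZ) [
    [], [195324], [195304], [195364], [195264], [195564], [195064], [196564], [194064], [201564],
    [189064], [70312], [130468], [135468], [136468], [128968], [136668], [129168], [130168],
    [135168], [136708], [129208], [130208], [135208], [130408], [135408], [136408], [128908],
    [195304, 195324], [70312, 195324], [136708, 195324], [129208, 195324], [130208, 195324],
    [135208, 195324], [130408, 195324], [135408, 195324], [136408, 195324], [128908, 195324],
    [70312, 195304], [130468, 195304], [135468, 195304], [136468, 195304], [128968, 195304],
    [136668, 195304], [129168, 195304], [130168, 195304], [135168, 195304], [70312, 195364],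
    [70312, 195264], [70312, 195564], [70312, 195064], [70312, 196564], [70312, 194064],
    [70312, 201564], [70312, 189064], [70312, 195304, 195324]]

def wordsLevelZero : List (List (Fin 8 → ℤ)) := List.map (List.map decodeZ) [
    [], [195324], [195364], [195264], [195564], [195064], [196564], [194064], [201564], [189064],
    [195372], [195272], [195572], [195072], [196572], [194072], [201572], [189072], [130468],
    [255468], [135468], [260468], [136468], [261468], [128968], [253968], [136668], [261668],
    [129168], [254168], [130168], [255168], [135168], [260168], [195364, 195324],
    [195264, 195324], [195564, 195324], [195064, 195324], [196564, 195324], [194064, 195324],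
    [201564, 195324], [189064, 195324], [195372, 195324], [195272, 195324], [195572, 195324],
    [195072, 195324], [196572, 195324], [194072, 195324], [201572, 195324], [189072, 195324],
    [130468, 195324], [255468, 195324], [135468, 195324], [260468, 195324], [136468, 195324],
    [261468, 195324], [128968, 195324], [253968, 195324], [136668, 195324], [261668, 195324],
    [129168, 195324], [254168, 195324], [130168, 195324], [255168, 195324], [135168, 195324],
    [260168, 195324], [195264, 195364], [195572, 195364], [195072, 195364], [196572, 195364],
    [194072, 195364], [201572, 195364], [189072, 195364], [136668, 195364], [261668, 195364],
    [129168, 195364], [254168, 195364], [130168, 195364], [255168, 195364], [135168, 195364],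
    [260168, 195364], [195572, 195264], [195072, 195264], [196572, 195264], [194072, 195264],
    [201572, 195264], [189072, 195264], [130468, 195264], [255468, 195264], [135468, 195264],
    [260468, 195264], [136468, 195264], [261468, 195264], [128968, 195264], [253968, 195264],
    [196572, 195564], [194072, 195564], [201572, 195564], [189072, 195564], [196572, 195064],
    [194072, 195064], [201572, 195064], [189072, 195064], [201572, 196564], [189072, 196564],
    [201572, 194064], [189072, 194064], [195272, 195372], [136668, 195372], [261668, 195372],
    [129168, 195372], [254168, 195372], [130168, 195372], [255168, 195372], [135168, 195372],
    [260168, 195372], [130468, 195272], [255468, 195272], [135468, 195272], [260468, 195272],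
    [136468, 195272], [261468, 195272], [128968, 195272], [253968, 195272], [135168, 130468],
    [260168, 255468]]

set_option maxRecDepth 10000 in
theorem exists_smul_eq_of_inner_thetaE8_eq_one {v : E8Space} (hv : v ∈ E8Delta)
    (h1 : ⟪thetaE8, v⟫ = 1) : ∃ h ∈ stabThetaE8, h • toE8 ![2, 0, 0, 0, 0, 0, 2, 0] = v :=
  exists_smul_toE8_eq_of_words (words := wordsLevelOne) (k := 1) (by decide) (by decide)
    (forall_isRootZ_of (by decide) (by decide)) hv (by exact_mod_cast h1)

set_option maxRecDepth 10000 in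
theorem exists_smul_eq_of_inner_thetaE8_eq_zero {v : E8Space} (hv : v ∈ E8Delta)
    (h0 : ⟪thetaE8, v⟫ = 0) : ∃ h ∈ stabThetaE8, h • toE8 ![2, 2, 0, 0, 0, 0, 0, 0] = v :=
  exists_smul_toE8_eq_of_words (words := wordsLevelZero) (k := 0) (by decide) (by decide)
    (forall_isRootZ_of (by decide) (by decide)) hv (by exact_mod_cast h0)

theorem exists_smul_eq_of_inner_thetaE8_eq {u v : E8Space} (hu : u ∈ E8Delta) (hv : v ∈ E8Delta)
    (huv : ⟪thetaE8, u⟫ = ⟪thetaE8, v⟫) : ∃ h ∈ stabThetaE8, h • u = v := by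
  wlog hnonneg : 0 ≤ ⟪thetaE8, u⟫ generalizing u v
  · obtain ⟨h, hh, hneg⟩ := this (neg_mem_E8Delta hu) (neg_mem_E8Delta hv)
      (by simpa only [inner_neg_right, neg_inj] using huv) (by rw [inner_neg_right]; linarith)
    exact ⟨h, hh, by rwa [smul_neg, neg_inj] at hneg⟩
  rcases inner_mem_of_mem_E8Delta thetaE8_mem hu with h | h | h | h | h
  · linarith
  · linarith
  · exact exists_smul_eq_of_smul_eq (exists_smul_eq_of_inner_thetaE8_eq_zero hu h)
      (exists_smul_eq_of_inner_thetaE8_eq_zero hv (huv ▸ h))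
  · exact exists_smul_eq_of_smul_eq (exists_smul_eq_of_inner_thetaE8_eq_one hu h)
      (exists_smul_eq_of_inner_thetaE8_eq_one hv (huv ▸ h))
  · rw [eq_thetaE8_of_inner_eq_two hu h, eq_thetaE8_of_inner_eq_two hv (huv ▸ h)]
    exact ⟨1, one_mem _, one_smul _ _⟩

theorem image_inner_thetaE8 :
    (fun w : E8Space ≃ₗ[ℝ] E8Space => ⟪thetaE8, w thetaE8⟫) '' weylGroupE8 = {-2, -1, 0, 1, 2} := by
  refine subset_antisymm ?_ ?_
  · rintro _ ⟨w, hw, rfl⟩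
    exact inner_mem_of_mem_E8Delta thetaE8_mem (map_mem_E8Delta_of_mem_weylGroupE8 hw thetaE8_mem)
  have hword {l : List (Fin 8 → ℤ)} (hl : ∀ a ∈ l, IsRootZ a) {k : ℤ}
      (hk : thetaZ ⬝ᵥ l.foldr reflZ thetaZ = 4 * k) :
      (k : ℝ) ∈ (fun w : E8Space ≃ₗ[ℝ] E8Space => ⟪thetaE8, w thetaE8⟫) '' weylGroupE8 := by
    obtain ⟨w, hw, hwr⟩ := exists_mem_weylGroupE8_toE8_eq_foldr hl
    refine ⟨w, hw, ?_⟩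
    simp only [← toE8_thetaZ, hwr _ (by decide : thetaZ ∈ e8LatticeZ), inner_toE8, hk]
    push_cast
    ring
  -- with `α = e₁ + e₇`, `β = e₂ + e₈`, the elements `s_θ, s_θ s_α, s_β s_α, s_α, 1` of `W`
  -- move `θ` to roots `x` with `⟪θ, x⟫ = -2, -1, 0, 1, 2`
  rintro x (rfl | rfl | rfl | rfl | rfl)
  · exact_mod_cast hword (l := [thetaZ]) (by decide) (k := -2) (by decide)
  · exact_mod_cast hword (l := [thetaZ, ![2, 0, 0, 0, 0, 0, 2, 0]]) (by decide) (k := -1)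
      (by decide)
  · exact_mod_cast hword (l := [![0, 2, 0, 0, 0, 0, 0, 2], ![2, 0, 0, 0, 0, 0, 2, 0]]) (by decide)
      (k := 0) (by decide)
  · exact_mod_cast hword (l := [![2, 0, 0, 0, 0, 0, 2, 0]]) (by decide) (k := 1) (by decide)
  · exact_mod_cast hword (l := []) (by decide) (k := 2) (by decide)

theorem doubleCoset_eq_doubleCoset_iff_inner_eq {w w' : E8Space ≃ₗ[ℝ] E8Space}
    (hw : w ∈ weylGroupE8) (hw' : w' ∈ weylGroupE8) :
    DoubleCoset.doubleCoset w stabThetaE8 stabThetaE8 =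
        DoubleCoset.doubleCoset w' stabThetaE8 stabThetaE8 ↔
      ⟪thetaE8, w thetaE8⟫ = ⟪thetaE8, w' thetaE8⟫ := by
  rw [stabThetaE8, doubleCoset_eq_doubleCoset_iff_exists_smul hw hw']
  constructor
  · rintro ⟨h, hh, hhw⟩
    obtain ⟨hhW, hhθ⟩ := Subgroup.mem_inf.1 hh
    rw [MulAction.mem_stabilizer_iff, LinearEquiv.smul_def] at hhθ
    rw [LinearEquiv.smul_def, LinearEquiv.smul_def, LinearEquiv.smul_def] at hhw
    calc ⟪thetaE8, w thetaE8⟫ = ⟪h thetaE8, h (w' thetaE8)⟫ := by rw [hhθ, hhw]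
      _ = ⟪thetaE8, w' thetaE8⟫ := inner_map_map_of_mem_weylGroupE8 hhW _ _
  · intro h
    exact exists_smul_eq_of_inner_thetaE8_eq (map_mem_E8Delta_of_mem_weylGroupE8 hw' thetaE8_mem)
      (map_mem_E8Delta_of_mem_weylGroupE8 hw thetaE8_mem) h.symm

/-- The Weyl group of E₈ has exactly 5 double cosets with respect to the
stabilizer `H` of the root θ: the set of subsets of the form `H w H` with
`w ∈ W` has exactly 5 elements. -/
theorem E8_doset_card :
    {s : Set (E8Space ≃ₗ[ℝ] E8Space) | ∃ w ∈ weylGroupE8,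
      s = {x | ∃ h₁ ∈ stabThetaE8, ∃ h₂ ∈ stabThetaE8, x = h₁ * w * h₂}}.ncard = 5 := by
  have hdosets : {s : Set (E8Space ≃ₗ[ℝ] E8Space) | ∃ w ∈ weylGroupE8,
      s = {x | ∃ h₁ ∈ stabThetaE8, ∃ h₂ ∈ stabThetaE8, x = h₁ * w * h₂}} =
      (fun w => DoubleCoset.doubleCoset w stabThetaE8 stabThetaE8) '' weylGroupE8 := by
    ext s
    refine exists_congr fun w => and_congr_right fun _ => ?_
    rw [eq_comm, Set.ext_iff, Set.ext_iff]
    simp only [DoubleCoset.mem_doubleCoset, Set.mem_ofPred_eq, SetLike.mem_coe]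
  rw [hdosets, Set.ncard_image_eq_ncard_image_of_eq_iff
    fun w hw w' hw' => doubleCoset_eq_doubleCoset_iff_inner_eq hw hw', image_inner_thetaE8]
  norm_num [Set.ncard_insert_of_notMem]
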